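/- Recursion lemma: with f_λ as above and λ = μ + ν, μ ≠ 0, ν ≠ 0 dominant, for any dominant t the coefficient n_λ(t) equals n_{μ,ν}^t plus a universal expression g depending only on the values n_μ(y), n_ν(z), n_s(x) for dominant weights with μ ⪇ λ, ν ⪇ λ, s ⪯ λ and μ−y ⪯ λ−t, ν−z ⪯ λ−t, s−x ⪨ λ−t. In particular, if all these 'smaller' values agree with the corresponding multiplicities m, and n_{μ,ν}^t = c_{μ,ν}^t, then n_λ(t) = m_λ(t). -/

import Mathlib

/-! Weights of a rank-`l` semisimple Lie algebra are recorded by their coordinates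
`λ i = ⟨λ, α_i^∨⟩` w.r.t. the fundamental weights, so the weight lattice is
`Λ = Fin l → ℤ` and the group ring `ℤ[Λ]` is `AddMonoidAlgebra ℤ (Fin l → ℤ)`,
with `e(λ) = Finsupp.single λ 1`. -/

/-- The simple root `α_j` in weight coordinates: `⟨α_j, α_i^∨⟩ = C i j` where `C` is the
Cartan matrix. -/
def alphaW {l : ℕ} (C : Matrix (Fin l) (Fin l) ℤ) (j : Fin l) : Fin l → ℤ :=
  fun i => C i j

/-- A weight is dominant iff all its coordinates are nonnegative. -/
def IsDominant {l : ℕ} (lam : Fin l → ℤ) : Prop := ∀ i, 0 ≤ lam i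

/-- The dominance order: `μ ⪯ λ` iff `λ - μ` is a nonnegative integer combination of the
simple roots. -/
def SubLE {l : ℕ} (C : Matrix (Fin l) (Fin l) ℤ) (μ lam : Fin l → ℤ) : Prop :=
  ∃ k : Fin l → ℕ, lam - μ = ∑ j, (k j : ℤ) • alphaW C j

/-- The simple reflection `s_i λ = λ - λ_i α_i`, acting on weight coordinates. -/
def srefW {l : ℕ} (C : Matrix (Fin l) (Fin l) ℤ) (i : Fin l) :
    AddMonoid.End (Fin l → ℤ) where
  toFun v := v - v i • alphaW C i
  map_zero' := by simp
  map_add' a b := by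
    funext j
    simp only [Pi.add_apply, Pi.sub_apply, Pi.smul_apply, smul_eq_mul]
    ring

/-- The Weyl group, realized as the monoid generated by the simple reflections. -/
def weylW {l : ℕ} (C : Matrix (Fin l) (Fin l) ℤ) : Submonoid (AddMonoid.End (Fin l → ℤ)) :=
  Submonoid.closure (Set.range (srefW C))

/-- An element `f ∈ ℤ[Λ]` is Weyl-invariant iff it is fixed by every simple reflection. -/
def WInvariant {l : ℕ} (C : Matrix (Fin l) (Fin l) ℤ)
    (f : AddMonoidAlgebra ℤ (Fin l → ℤ)) : Prop :=
  ∀ i, Finsupp.mapDomain (srefW C i) f.coeff = f.coeff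

/-- The invariant subring `ℤ[Λ]^W`, as a `ℤ`-submodule of `ℤ[Λ]`. -/
noncomputable def invariants {l : ℕ} (C : Matrix (Fin l) (Fin l) ℤ) :
    Submodule ℤ (AddMonoidAlgebra ℤ (Fin l → ℤ)) where
  carrier := {f | WInvariant C f}
  add_mem' := by
    intro a b ha hb i
    show Finsupp.mapDomain _ (a.coeff + b.coeff) = a.coeff + b.coeff
    rw [Finsupp.mapDomain_add, ha i, hb i]
  zero_mem' := by intro i; simp [Finsupp.mapDomain]
  smul_mem' := by
    intro r a ha i
    show Finsupp.mapDomain _ (r • a.coeff) = r • a.coeff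
    rw [Finsupp.mapDomain_smul, ha i]

/-- The data of the formal characters `ch_λ = Σ_x m_λ(x) e(x)` of the irreducible (Weyl)
modules `V(λ)` of a complex semisimple Lie algebra of rank `l`, together with the
Littlewood–Richardson coefficients `c_{μ,ν}^λ` and the longest Weyl group element `w0`,
axiomatized by their standard properties. -/
structure CharData (l : ℕ) where
  /-- the Cartan matrix -/
  C : Matrix (Fin l) (Fin l) ℤ
  /-- `ch lam` is the formal character of `V(lam)` (for `lam` dominant); its coefficient
  `ch lam x` is the weight multiplicity `m_lam(x) = dim V(lam)_x`. -/
  ch : (Fin l → ℤ) → AddMonoidAlgebra ℤ (Fin l → ℤ)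
  /-- the Littlewood–Richardson coefficients: `c μ ν lam` is the multiplicity of `V(lam)`
  in `V(μ) ⊗ V(ν)`. -/
  c : (Fin l → ℤ) → (Fin l → ℤ) → (Fin l → ℤ) → ℤ
  /-- the longest element of the Weyl group -/
  w0 : AddMonoid.End (Fin l → ℤ)
  /-- the highest weight has multiplicity one -/
  ch_lead : ∀ lam, IsDominant lam → (ch lam).coeff lam = 1
  /-- every weight of `V(lam)` is `⪯ lam` -/
  ch_le : ∀ lam x, IsDominant lam → (ch lam).coeff x ≠ 0 → SubLE C x lam
  /-- weight multiplicities are nonnegative -/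
  ch_nonneg : ∀ lam x, IsDominant lam → 0 ≤ (ch lam).coeff x
  /-- formal characters are Weyl invariant -/
  ch_inv : ∀ lam, IsDominant lam → WInvariant C (ch lam)
  /-- only finitely many `c μ ν lam` are nonzero -/
  c_finite : ∀ μ ν, (Function.support (c μ ν)).Finite
  /-- `c μ ν lam` vanishes unless `lam` is dominant -/
  c_dom : ∀ μ ν lam, c μ ν lam ≠ 0 → IsDominant lam
  /-- the defining decomposition `ch_μ · ch_ν = Σ_λ c_{μ,ν}^λ ch_λ` of a tensor product of
  irreducibles into irreducibles -/
  c_spec : ∀ μ ν, IsDominant μ → IsDominant ν →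
    ch μ * ch ν = ∑ᶠ lam, c μ ν lam • ch lam
  /-- `w0` lies in the Weyl group -/
  w0_mem : w0 ∈ weylW C
  /-- `w0` sends every simple root to the negative of a simple root (this characterizes
  the longest element) -/
  w0_long : ∀ i, ∃ j, w0 (alphaW C i) = -alphaW C j
  /-- `V(ν)* ≅ V(-w0 ν)`: the character of `V(-w0 ν)` is the image of `ch_ν` under
  `e(x) ↦ e(-x)` -/
  ch_dual : ∀ ν, IsDominant ν → (ch (-(w0 ν))).coeff = Finsupp.mapDomain (fun x => -x) (ch ν).coeff


/-! Everything is read off from the expansions `f_μ f_ν = Σ_s N_{μ,ν}^s f_s` of the two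
families. For `x ⪰ t` the coefficient
`(f_μ f_ν)(x) = Σ_{y + z = x} f_μ(y) f_ν(z)` only involves values `f_μ(y)`, `f_ν(z)` with
`μ - y, ν - z ⪯ λ - t`, so it is the same for both families. Comparing the expansions at a
weight `m ⪰ t` of maximal height where `N^m ≠ N'^m` shows that the structure constants agree
on all `s ⪰ t`; comparing them at `t` itself, every term except `s = λ` agrees, and
`N^λ_{μ,ν} = 1`.

The Cartan matrix is arbitrary, so a height function on the dominance order has to be produced
from the `W`-invariance of `f`: the simple reflections permute the finite supports of the
`f(ω_i)`, which forces `W` to be finite and `C_ii = 2` whenever `α_i ≠ 0`. Summing the dot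
product over `W` gives a positive definite `W`-invariant form `B`, and `x ↦ B(ρ, x)` with
`ρ = (1, …, 1)` is positive on every nonzero simple root, since `2 B(ρ, α_i) = B(α_i, α_i)`.
-/

namespace Finsupp

variable {α M : Type*} [DecidableEq α] [AddCommMonoid M]

theorem image_support_eq_of_mapDomain_eq {T : α → α} {g : α →₀ M} (h : g.mapDomain T = g) :
    g.support.image T = g.support := by
  have hsub : g.support ⊆ g.support.image T := by
    conv_lhs => rw [← h]
    exact mapDomain_support
  exact (Finset.eq_of_subset_of_card_le hsub Finset.card_image_le).symm

theorem injOn_support_of_mapDomain_eq {T : α → α} {g : α →₀ M} (h : g.mapDomain T = g) :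
    Set.InjOn T g.support :=
  Finset.injOn_of_card_image_eq (by rw [image_support_eq_of_mapDomain_eq h])

theorem exists_iterate_eq_self_of_mapDomain_eq {T : α → α} {g : α →₀ M}
    (h : g.mapDomain T = g) {x : α} (hx : x ∈ g.support) : ∃ n, 0 < n ∧ T^[n] x = x := by
  have hmaps : Set.MapsTo T g.support g.support := fun y hy => by
    rw [Finset.mem_coe, ← image_support_eq_of_mapDomain_eq h]
    exact Finset.mem_image_of_mem T hy
  obtain ⟨n, hn, hper⟩ := Function.mem_periodicPts.1 <|
    ((hmaps.restrict_inj).2 (injOn_support_of_mapDomain_eq h)).mem_periodicPts ⟨x, hx⟩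
  refine ⟨n, hn, ?_⟩
  have := congrArg Subtype.val hper.eq
  rwa [hmaps.coe_iterate_restrict] at this

end Finsupp

section WeylGroup

variable {l : ℕ} {C : Matrix (Fin l) (Fin l) ℤ}

theorem srefW_apply (i : Fin l) (v : Fin l → ℤ) : srefW C i v = v - v i • alphaW C i := rfl

theorem srefW_iterate (i : Fin l) (n : ℕ) (v : Fin l → ℤ) :
    (srefW C i)^[n] v = v - ((∑ m ∈ Finset.range n, (1 - C i i) ^ m) * v i) • alphaW C i := by
  induction n generalizing v with
  | zero => simp
  | succ n ih =>
    rw [Function.iterate_succ_apply, ih, geom_sum_succ]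
    simp only [srefW_apply, Pi.sub_apply, Pi.smul_apply, smul_eq_mul, alphaW]
    rw [sub_sub, ← add_smul]
    congr 2
    ring

theorem srefW_mul_self (i : Fin l) (h : C i i = 2) : srefW C i * srefW C i = 1 := by
  ext v j
  simp only [AddMonoid.End.coe_mul, Function.comp_apply, srefW_apply, AddMonoid.End.one_apply,
    Pi.sub_apply, Pi.smul_apply, smul_eq_mul, alphaW, h]
  ring

theorem isDominant_single (i : Fin l) : IsDominant (Pi.single i (1 : ℤ)) :=
  fun j => by
    rw [Pi.single_apply]
    split_ifs <;> norm_num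

theorem WInvariant.mapDomain_eq_of_mem_weylW {g : AddMonoidAlgebra ℤ (Fin l → ℤ)}
    (hg : WInvariant C g) {w : AddMonoid.End (Fin l → ℤ)} (hw : w ∈ weylW C) :
    Finsupp.mapDomain w g.coeff = g.coeff := by
  induction hw using Submonoid.closure_induction with
  | mem x hx =>
    obtain ⟨i, rfl⟩ := hx
    exact hg i
  | one => exact Finsupp.mapDomain_id
  | mul x y _ _ ihx ihy =>
    rw [AddMonoid.End.coe_mul, Finsupp.mapDomain_comp, ihy, ihx]

variable {f : (Fin l → ℤ) → AddMonoidAlgebra ℤ (Fin l → ℤ)}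

theorem mem_support_coeff_self (hf_lead : ∀ lam, IsDominant lam → (f lam).coeff lam = 1)
    {lam : Fin l → ℤ} (hlam : IsDominant lam) : lam ∈ (f lam).coeff.support := by
  rw [Finsupp.mem_support_iff, hf_lead lam hlam]
  exact one_ne_zero

theorem cartan_diag_eq_two_of_alphaW_ne_zero
    (hf_inv : ∀ lam, IsDominant lam → WInvariant C (f lam))
    (hf_lead : ∀ lam, IsDominant lam → (f lam).coeff lam = 1) {i : Fin l}
    (hα : alphaW C i ≠ 0) : C i i = 2 := by
  obtain ⟨n, hn, hfix⟩ := Finsupp.exists_iterate_eq_self_of_mapDomain_eq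
    (hf_inv _ (isDominant_single i) i) (mem_support_coeff_self hf_lead (isDominant_single i))
  rw [srefW_iterate, sub_eq_self, Pi.single_eq_same, mul_one, smul_eq_zero] at hfix
  have := ((geom_sum_eq_zero_iff_neg_one hn.ne').1 (hfix.resolve_right hα)).1
  omega

theorem weylW_finite (hf_inv : ∀ lam, IsDominant lam → WInvariant C (f lam))
    (hf_lead : ∀ lam, IsDominant lam → (f lam).coeff lam = 1) :
    (weylW C : Set (AddMonoid.End (Fin l → ℤ))).Finite := by
  refine Set.Finite.of_finite_image (f := fun w i => w (Pi.single i 1)) ?_ ?_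
  · refine (Set.Finite.pi fun i => (f (Pi.single i 1)).coeff.support.finite_toSet).subset ?_
    rintro _ ⟨w, hw, rfl⟩ i -
    rw [Finset.mem_coe, ← Finsupp.image_support_eq_of_mapDomain_eq
      ((hf_inv _ (isDominant_single i)).mapDomain_eq_of_mem_weylW hw)]
    exact Finset.mem_image_of_mem w (mem_support_coeff_self hf_lead (isDominant_single i))
  · intro w _ w' _ h
    refine AddMonoidHom.toIntLinearMap_injective ((Pi.basisFun ℤ (Fin l)).ext fun i => ?_)
    rw [Pi.basisFun_apply]
    exact congrFun h i

end WeylGroup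

section AveragedForm

variable {l : ℕ}

def averagedDot (W : Finset (AddMonoid.End (Fin l → ℤ))) (x : Fin l → ℤ) :
    (Fin l → ℤ) →+ ℤ :=
  ∑ w ∈ W, (AddMonoidHom.mk' (w x ⬝ᵥ ·) (dotProduct_add _)).comp w

variable {W : Finset (AddMonoid.End (Fin l → ℤ))}

theorem averagedDot_apply (x y : Fin l → ℤ) :
    averagedDot W x y = ∑ w ∈ W, w x ⬝ᵥ w y := by
  rw [averagedDot, AddMonoidHom.finsetSum_apply]
  rfl

theorem averagedDot_self_pos (hW : 1 ∈ W) {x : Fin l → ℤ} (hx : x ≠ 0) :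
    0 < averagedDot W x x := by
  have hnonneg : ∀ w ∈ W, 0 ≤ w x ⬝ᵥ w x := fun w _ =>
    Fintype.sum_nonneg fun _ => mul_self_nonneg _
  calc 0 < x ⬝ᵥ x := (hnonneg 1 hW).lt_of_ne (Ne.symm (dotProduct_self_eq_zero.not.2 hx))
    _ ≤ averagedDot W x x := averagedDot_apply x x ▸ Finset.single_le_sum hnonneg hW

theorem averagedDot_map_map_of_mul_self {s : AddMonoid.End (Fin l → ℤ)}
    (hWs : ∀ w ∈ W, w * s ∈ W) (hs : s * s = 1) (x y : Fin l → ℤ) :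
    averagedDot W (s x) (s y) = averagedDot W x y := by
  simp only [averagedDot_apply]
  refine Finset.sum_nbij' (· * s) (· * s) hWs hWs (fun w _ => ?_) (fun w _ => ?_) fun w _ => rfl
  all_goals simp only [mul_assoc, hs, mul_one]

end AveragedForm

theorem exists_pos_height_of_wInvariant {l : ℕ} {C : Matrix (Fin l) (Fin l) ℤ}
    {f : (Fin l → ℤ) → AddMonoidAlgebra ℤ (Fin l → ℤ)}
    (hf_inv : ∀ lam, IsDominant lam → WInvariant C (f lam))
    (hf_lead : ∀ lam, IsDominant lam → (f lam).coeff lam = 1) :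
    ∃ φ : (Fin l → ℤ) →+ ℤ, ∀ j, alphaW C j ≠ 0 → 0 < φ (alphaW C j) := by
  set W := (weylW_finite hf_inv hf_lead).toFinset
  have hW : ∀ w, w ∈ W ↔ w ∈ weylW C := fun w => Set.Finite.mem_toFinset _
  refine ⟨averagedDot W 1, fun j hα => ?_⟩
  have hC : C j j = 2 := cartan_diag_eq_two_of_alphaW_ne_zero hf_inv hf_lead hα
  have hWs : ∀ w ∈ W, w * srefW C j ∈ W := fun w hw =>
    (hW _).2 (mul_mem ((hW w).1 hw) (Submonoid.subset_closure (Set.mem_range_self j)))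
  have h1 : srefW C j 1 = 1 - alphaW C j := by simp [srefW_apply]
  have hα' : srefW C j (alphaW C j) = -alphaW C j := by
    rw [srefW_apply, show alphaW C j j = 2 from hC]
    abel
  have key := averagedDot_map_map_of_mul_self hWs (srefW_mul_self j hC) 1 (alphaW C j)
  rw [h1, hα'] at key
  have hpos := averagedDot_self_pos ((hW 1).2 (one_mem _)) hα
  simp only [averagedDot_apply, map_sub, map_neg, sub_dotProduct, Finset.sum_sub_distrib]
    at key hpos ⊢
  linarith

namespace SubLE

variable {l : ℕ} {C : Matrix (Fin l) (Fin l) ℤ}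

theorem refl (a : Fin l → ℤ) : SubLE C a a := ⟨0, by simp⟩

theorem of_sub_eq_add {a b c d x y : Fin l → ℤ} (h₁ : SubLE C a b) (h₂ : SubLE C c d)
    (h : y - x = (b - a) + (d - c)) : SubLE C x y := by
  obtain ⟨k₁, hk₁⟩ := h₁
  obtain ⟨k₂, hk₂⟩ := h₂
  refine ⟨k₁ + k₂, ?_⟩
  simp only [h, hk₁, hk₂, Pi.add_apply, Nat.cast_add, add_smul, Finset.sum_add_distrib]

theorem trans {a b c : Fin l → ℤ} (h₁ : SubLE C a b) (h₂ : SubLE C b c) : SubLE C a c :=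
  h₁.of_sub_eq_add h₂ (by abel)

variable {φ : (Fin l → ℤ) →+ ℤ} (hφ : ∀ j, alphaW C j ≠ 0 → 0 < φ (alphaW C j))
include hφ

theorem eq_or_lt_height {a b : Fin l → ℤ} (h : SubLE C a b) : a = b ∨ φ a < φ b := by
  obtain ⟨k, hk⟩ := h
  have hterm : ∀ j ∈ Finset.univ, 0 ≤ φ ((k j : ℤ) • alphaW C j) := fun j _ => by
    rw [map_zsmul, smul_eq_mul]
    rcases eq_or_ne (alphaW C j) 0 with h0 | h0
    · simp [h0]
    · exact mul_nonneg (Nat.cast_nonneg _) (hφ j h0).le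
  rcases (Finset.sum_nonneg hterm).eq_or_lt with h0 | hpos
  · have hzero : ∀ j ∈ Finset.univ, (k j : ℤ) • alphaW C j = 0 := fun j hj => by
      have := (Finset.sum_eq_zero_iff_of_nonneg hterm).1 h0.symm j hj
      rw [map_zsmul, smul_eq_mul, mul_eq_zero] at this
      rcases this with hk0 | hφ0
      · rw [hk0, zero_smul]
      · rw [not_ne_iff.1 (mt (hφ j) (not_lt.2 hφ0.le)), smul_zero]
    exact .inl (sub_eq_zero.1 (hk.trans (Finset.sum_eq_zero hzero))).symm
  · right
    rwa [← sub_pos, ← map_sub, hk, map_sum]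

theorem height_le {a b : Fin l → ℤ} (h : SubLE C a b) : φ a ≤ φ b := by
  rcases h.eq_or_lt_height hφ with rfl | hlt
  · rfl
  · exact hlt.le

theorem eq_of_height_le {a b : Fin l → ℤ} (h : SubLE C a b) (h' : φ b ≤ φ a) : a = b :=
  (h.eq_or_lt_height hφ).resolve_right h'.not_gt

theorem antisymm {a b : Fin l → ℤ} (h : SubLE C a b) (h' : SubLE C b a) : a = b :=
  h.eq_of_height_le hφ (h'.height_le hφ)

theorem eq_of_add_eq {a b c d : Fin l → ℤ} (hab : SubLE C a b) (hcd : SubLE C c d)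
    (h : a + c = b + d) : a = b ∧ c = d := by
  have hsum := congrArg φ h
  rw [map_add, map_add] at hsum
  have := hab.height_le hφ
  have := hcd.height_le hφ
  exact ⟨hab.eq_of_height_le hφ (by linarith), hcd.eq_of_height_le hφ (by linarith)⟩

end SubLE

theorem AddMonoidAlgebra.coeff_mul_congr {R G : Type*} [Semiring R] [AddGroup G]
    {p q p' q' : AddMonoidAlgebra R G} {x : G}
    (h : ∀ y z, y + z = x → p.coeff y * q.coeff z = p'.coeff y * q'.coeff z) :
    (p * q).coeff x = (p' * q').coeff x := by
  classical
  rw [coeff_mul_apply_left, coeff_mul_apply_left,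
    Finsupp.sum_of_support_subset _ Finset.subset_union_left _ (fun _ _ => zero_mul _),
    Finsupp.sum_of_support_subset _ Finset.subset_union_right _ (fun _ _ => zero_mul _)]
  exact Finset.sum_congr rfl fun y _ => h y (-y + x) (add_neg_cancel_left y x)

theorem IsDominant.add {l : ℕ} {a b : Fin l → ℤ} (ha : IsDominant a) (hb : IsDominant b) :
    IsDominant (a + b) := fun i => add_nonneg (ha i) (hb i)

structure IsUnitriangularFamily {l : ℕ} (C : Matrix (Fin l) (Fin l) ℤ)
    (f : (Fin l → ℤ) → AddMonoidAlgebra ℤ (Fin l → ℤ))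
    (N : (Fin l → ℤ) → (Fin l → ℤ) → (Fin l → ℤ) → ℤ) : Prop where
  lead : ∀ lam, IsDominant lam → (f lam).coeff lam = 1
  supp : ∀ lam x, IsDominant lam → (f lam).coeff x ≠ 0 → SubLE C x lam
  finite : ∀ μ ν, (Function.support (N μ ν)).Finite
  dom : ∀ μ ν lam, N μ ν lam ≠ 0 → IsDominant lam ∧ SubLE C lam (μ + ν)
  spec : ∀ μ ν, IsDominant μ → IsDominant ν →
    f μ * f ν = ∑ᶠ lam, N μ ν lam • f lam

namespace IsUnitriangularFamily

variable {l : ℕ} {C : Matrix (Fin l) (Fin l) ℤ}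
  {f : (Fin l → ℤ) → AddMonoidAlgebra ℤ (Fin l → ℤ)}
  {N : (Fin l → ℤ) → (Fin l → ℤ) → (Fin l → ℤ) → ℤ}
  (hF : IsUnitriangularFamily C f N)
  {μ ν : Fin l → ℤ}
include hF

theorem coeff_eq_zero_of_not_subLE {s x : Fin l → ℤ} (hs : IsDominant s) (h : ¬SubLE C x s) :
    (f s).coeff x = 0 :=
  not_ne_iff.1 fun hx => h (hF.supp s x hs hx)

theorem structConst_mul_coeff_eq_zero_of_not_subLE {s x : Fin l → ℤ} (h : ¬SubLE C x s) :
    N μ ν s * (f s).coeff x = 0 := by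
  rcases eq_or_ne (N μ ν s) 0 with h0 | h0
  · rw [h0, zero_mul]
  · rw [hF.coeff_eq_zero_of_not_subLE (hF.dom μ ν s h0).1 h, mul_zero]

theorem coeff_mul (hμ : IsDominant μ) (hν : IsDominant ν) (x : Fin l → ℤ) :
    (f μ * f ν).coeff x = ∑ᶠ s, N μ ν s * (f s).coeff x := by
  rw [hF.spec μ ν hμ hν]
  exact ((Finsupp.applyAddHom x).comp AddMonoidAlgebra.coeffAddEquiv.toAddMonoidHom).map_finsum
    (Function.HasFiniteSupport.fun_smul_left (hF.finite μ ν) f)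

theorem hasFiniteSupport_structConst_mul_coeff (x : Fin l → ℤ) :
    Function.HasFiniteSupport fun s => N μ ν s * (f s).coeff x :=
  Function.HasFiniteSupport.fun_mul_left (hF.finite μ ν) _

variable {φ : (Fin l → ℤ) →+ ℤ} (hφ : ∀ j, alphaW C j ≠ 0 → 0 < φ (alphaW C j))
include hφ

theorem coeff_mul_add_eq_one (hμ : IsDominant μ) (hν : IsDominant ν) :
    (f μ * f ν).coeff (μ + ν) = 1 := by
  rw [AddMonoidAlgebra.coeff_mul_congr (p' := .single μ 1) (q' := .single ν 1),
    AddMonoidAlgebra.single_mul_single, mul_one, AddMonoidAlgebra.coeff_single,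
    Finsupp.single_eq_same]
  intro y z hyz
  by_cases hy : y = μ
  · obtain rfl : z = ν := by rw [hy] at hyz; exact add_left_cancel hyz
    simp [hy, hF.lead _ hμ, hF.lead _ hν]
  · rw [AddMonoidAlgebra.coeff_single, Finsupp.single_eq_of_ne' (Ne.symm hy), zero_mul]
    by_contra hne
    exact hy ((hF.supp μ y hμ (left_ne_zero_of_mul hne)).eq_of_add_eq hφ
      (hF.supp ν z hν (right_ne_zero_of_mul hne)) hyz).1

theorem structConst_add_eq_one (hμ : IsDominant μ) (hν : IsDominant ν) :
    N μ ν (μ + ν) = 1 := by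
  have h := hF.coeff_mul hμ hν (μ + ν)
  rw [hF.coeff_mul_add_eq_one hφ hμ hν, finsum_eq_single _ (μ + ν), hF.lead _ (hμ.add hν),
    mul_one] at h
  · exact h.symm
  intro s hs
  rcases eq_or_ne (N μ ν s) 0 with h0 | h0
  · rw [h0, zero_mul]
  obtain ⟨hsdom, hsle⟩ := hF.dom μ ν s h0
  rw [hF.coeff_eq_zero_of_not_subLE hsdom fun hle => hs (hsle.antisymm hφ hle), mul_zero]

end IsUnitriangularFamily

section Comparison

variable {l : ℕ} {C : Matrix (Fin l) (Fin l) ℤ}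
  {f f' : (Fin l → ℤ) → AddMonoidAlgebra ℤ (Fin l → ℤ)}
  {N N' : (Fin l → ℤ) → (Fin l → ℤ) → (Fin l → ℤ) → ℤ}
  (hF : IsUnitriangularFamily C f N) (hF' : IsUnitriangularFamily C f' N')
  {φ : (Fin l → ℤ) →+ ℤ} (hφ : ∀ j, alphaW C j ≠ 0 → 0 < φ (alphaW C j))
  {μ ν t : Fin l → ℤ} (hμ : IsDominant μ) (hν : IsDominant ν)
  (hμy : ∀ y, SubLE C (μ - y) (μ + ν - t) → (f μ).coeff y = (f' μ).coeff y)
  (hνz : ∀ z, SubLE C (ν - z) (μ + ν - t) → (f ν).coeff z = (f' ν).coeff z)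
  (hsx : ∀ s x, IsDominant s → SubLE C s (μ + ν) →
    SubLE C (s - x) (μ + ν - t) → s - x ≠ μ + ν - t → (f s).coeff x = (f' s).coeff x)
  (hNt : N μ ν t = N' μ ν t)

include hF hF' hμ hν hμy hνz in
theorem coeff_mul_eq_of_agree {x : Fin l → ℤ} (htx : SubLE C t x) :
    (f μ * f ν).coeff x = (f' μ * f' ν).coeff x := by
  refine AddMonoidAlgebra.coeff_mul_congr fun y z hyz => ?_
  by_cases hy : SubLE C y μ
  · by_cases hz : SubLE C z ν
    · rw [hμy y (hz.of_sub_eq_add htx (by rw [← hyz]; abel)),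
        hνz z (hy.of_sub_eq_add htx (by rw [← hyz]; abel))]
    · rw [hF.coeff_eq_zero_of_not_subLE hν hz, hF'.coeff_eq_zero_of_not_subLE hν hz, mul_zero,
        mul_zero]
  · rw [hF.coeff_eq_zero_of_not_subLE hμ hy, hF'.coeff_eq_zero_of_not_subLE hμ hy, zero_mul,
      zero_mul]

include hF hF' hμ hν hμy hνz in
theorem finsum_sub_eq_zero_of_agree {x : Fin l → ℤ} (htx : SubLE C t x) :
    ∑ᶠ s, (N μ ν s * (f s).coeff x - N' μ ν s * (f' s).coeff x) = 0 := by
  rw [finsum_sub_distrib (hF.hasFiniteSupport_structConst_mul_coeff x)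
    (hF'.hasFiniteSupport_structConst_mul_coeff x), ← hF.coeff_mul hμ hν,
    ← hF'.coeff_mul hμ hν, coeff_mul_eq_of_agree hF hF' hμ hν hμy hνz htx, sub_self]

include hF hF' hφ hsx in
theorem structConst_mul_coeff_eq_of_agree {s x : Fin l → ℤ} (htx : SubLE C t x)
    (hxt : x = t → s ≠ μ + ν) (hN : SubLE C x s → N μ ν s = N' μ ν s) :
    N μ ν s * (f s).coeff x = N' μ ν s * (f' s).coeff x := by
  by_cases hxs : SubLE C x s
  · rw [← hN hxs]
    rcases eq_or_ne (N μ ν s) 0 with h0 | h0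
    · rw [h0, zero_mul, zero_mul]
    obtain ⟨hs, hsle⟩ := hF.dom μ ν s h0
    refine congrArg _ (hsx s x hs hsle (hsle.of_sub_eq_add htx (by abel)) fun heq => ?_)
    rw [sub_eq_sub_iff_add_eq_add] at heq
    obtain ⟨rfl, rfl⟩ := hsle.eq_of_add_eq hφ htx heq
    exact hxt rfl rfl
  · rw [hF.structConst_mul_coeff_eq_zero_of_not_subLE hxs,
      hF'.structConst_mul_coeff_eq_zero_of_not_subLE hxs]

include hF hF' hφ hμ hν hμy hνz hsx hNt in
theorem structConst_eq_of_agree {s : Fin l → ℤ} (hts : SubLE C t s) :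
    N μ ν s = N' μ ν s := by
  classical
  by_contra hne
  set D := ((hF.finite μ ν).union (hF'.finite μ ν)).toFinset.filter
    fun s => SubLE C t s ∧ N μ ν s ≠ N' μ ν s
  have hD : ∀ s, s ∈ D ↔ SubLE C t s ∧ N μ ν s ≠ N' μ ν s := fun s => by
    simp only [D, Finset.mem_filter, Set.Finite.mem_toFinset, Set.mem_union,
      Function.mem_support, and_iff_right_iff_imp]
    intro ⟨_, h⟩
    by_contra! h0
    exact h (h0.1.trans h0.2.symm)
  obtain ⟨m, hmD, hmax⟩ := Finset.exists_max_image D φ ⟨s, (hD s).2 ⟨hts, hne⟩⟩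
  obtain ⟨htm, hm⟩ := (hD m).1 hmD
  have hmt : m ≠ t := by rintro rfl; exact hm hNt
  have hmdom : IsDominant m := by
    rcases eq_or_ne (N μ ν m) 0 with h0 | h0
    · exact (hF'.dom μ ν m fun h => hm (h0.trans h.symm)).1
    · exact (hF.dom μ ν m h0).1
  have hterm : ∀ s ≠ m, N μ ν s * (f s).coeff m - N' μ ν s * (f' s).coeff m = 0 := by
    intro s hsm
    refine sub_eq_zero.2 <|
      structConst_mul_coeff_eq_of_agree hF hF' hφ hsx htm (absurd · hmt) fun hms => ?_
    by_contra h
    exact hsm (hms.eq_of_height_le hφ (hmax s ((hD s).2 ⟨htm.trans hms, h⟩))).symm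
  have h := finsum_sub_eq_zero_of_agree hF hF' hμ hν hμy hνz htm
  rw [finsum_eq_single _ m hterm, hF.lead m hmdom, hF'.lead m hmdom, mul_one, mul_one,
    sub_eq_zero] at h
  exact hm h

end Comparison

/-- That `n_λ(t) − n_{μ,ν}^t` is a universal expression in the smaller values is expressed by
comparing two families `f, N` and `f', N'` that agree on those values; taking `f' = ch`,
`N' = c` gives `n_λ(t) = m_λ(t)`. -/
theorem recursion_lemma_general {l : ℕ} (C : Matrix (Fin l) (Fin l) ℤ)
    (f f' : (Fin l → ℤ) → AddMonoidAlgebra ℤ (Fin l → ℤ))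
    (N N' : (Fin l → ℤ) → (Fin l → ℤ) → (Fin l → ℤ) → ℤ)
    -- axioms for the family `f, N`:
    (hf_inv : ∀ lam, IsDominant lam → WInvariant C (f lam))
    (hf_lead : ∀ lam, IsDominant lam → (f lam).coeff lam = 1)
    (hf_supp : ∀ lam x, IsDominant lam → (f lam).coeff x ≠ 0 → SubLE C x lam)
    (hN_finite : ∀ μ ν, (Function.support (N μ ν)).Finite)
    (hN_dom : ∀ μ ν lam, N μ ν lam ≠ 0 → IsDominant lam ∧ SubLE C lam (μ + ν))
    (hN_spec : ∀ μ ν, IsDominant μ → IsDominant ν →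
      f μ * f ν = ∑ᶠ lam, N μ ν lam • f lam)
    -- axioms for the family `f', N'`:
    (hf'_lead : ∀ lam, IsDominant lam → (f' lam).coeff lam = 1)
    (hf'_supp : ∀ lam x, IsDominant lam → (f' lam).coeff x ≠ 0 → SubLE C x lam)
    (hN'_finite : ∀ μ ν, (Function.support (N' μ ν)).Finite)
    (hN'_dom : ∀ μ ν lam, N' μ ν lam ≠ 0 → IsDominant lam ∧ SubLE C lam (μ + ν))
    (hN'_spec : ∀ μ ν, IsDominant μ → IsDominant ν →
      f' μ * f' ν = ∑ᶠ lam, N' μ ν lam • f' lam)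
    -- the decomposition `λ = μ + ν` and the weight `t`:
    (μ ν t : Fin l → ℤ) (hμ : IsDominant μ) (hν : IsDominant ν)
    -- agreement of the two families on the "smaller" values:
    (hμy : ∀ y, SubLE C (μ - y) (μ + ν - t) → (f μ).coeff y = (f' μ).coeff y)
    (hνz : ∀ z, SubLE C (ν - z) (μ + ν - t) → (f ν).coeff z = (f' ν).coeff z)
    (hsx : ∀ s x, IsDominant s → SubLE C s (μ + ν) →
      SubLE C (s - x) (μ + ν - t) → s - x ≠ μ + ν - t → (f s).coeff x = (f' s).coeff x)
    (hNt : N μ ν t = N' μ ν t) :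
    (f (μ + ν)).coeff t - N μ ν t = (f' (μ + ν)).coeff t - N' μ ν t := by
  obtain ⟨φ, hφ⟩ := exists_pos_height_of_wInvariant hf_inv hf_lead
  have hF : IsUnitriangularFamily C f N := ⟨hf_lead, hf_supp, hN_finite, hN_dom, hN_spec⟩
  have hF' : IsUnitriangularFamily C f' N' :=
    ⟨hf'_lead, hf'_supp, hN'_finite, hN'_dom, hN'_spec⟩
  have hterm : ∀ s ≠ μ + ν, N μ ν s * (f s).coeff t - N' μ ν s * (f' s).coeff t = 0 :=
    fun s hs => sub_eq_zero.2 <|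
      structConst_mul_coeff_eq_of_agree hF hF' hφ hsx (.refl t) (fun _ => hs)
        (structConst_eq_of_agree hF hF' hφ hμ hν hμy hνz hsx hNt)
  have h := finsum_sub_eq_zero_of_agree hF hF' hμ hν hμy hνz (.refl t)
  rw [finsum_eq_single _ _ hterm, hF.structConst_add_eq_one hφ hμ hν,
    hF'.structConst_add_eq_one hφ hμ hν, one_mul, one_mul, sub_eq_zero] at h
  rw [h, hNt]

/-- **Recursion lemma.** Let `λ = μ + ν` with `μ, ν` nonzero dominant weights, and let `t`
be dominant.  For a family `f` as in the rigidity theorem (supported on `Π(λ)`, leading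
coefficient `1`, `W`-invariant), with structure constants `N` defined by
`f_μ · f_ν = Σ_λ N_{μ,ν}^λ f_λ`, the difference `n_λ(t) − n_{μ,ν}^t` is a universal
expression `g` in the values `n_μ(y), n_ν(z), n_s(x)` for `s ⪯ λ` dominant and
`μ − y ⪯ λ − t`, `ν − z ⪯ λ − t`, `s − x ⪨ λ − t`.  This is formalized by comparing two
such families `f, N` and `f', N'` over the same root system: if they agree on all those
values, then `n_λ(t) − n_{μ,ν}^t = n'_λ(t) − n'_{μ,ν}^t`; in particular, taking
`f' = ch`, `N' = c`, if all the smaller values agree with the multiplicities `m` and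
`n_{μ,ν}^t = c_{μ,ν}^t`, then `n_λ(t) = m_λ(t)`. -/
theorem recursion_lemma {l : ℕ} (C : Matrix (Fin l) (Fin l) ℤ)
    (f f' : (Fin l → ℤ) → AddMonoidAlgebra ℤ (Fin l → ℤ))
    (N N' : (Fin l → ℤ) → (Fin l → ℤ) → (Fin l → ℤ) → ℤ)
    -- axioms for the family `f, N`:
    (hf_inv : ∀ lam, IsDominant lam → WInvariant C (f lam))
    (hf_lead : ∀ lam, IsDominant lam → (f lam).coeff lam = 1)
    (hf_supp : ∀ lam x, IsDominant lam → (f lam).coeff x ≠ 0 → SubLE C x lam)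
    (hN_finite : ∀ μ ν, (Function.support (N μ ν)).Finite)
    (hN_dom : ∀ μ ν lam, N μ ν lam ≠ 0 → IsDominant lam ∧ SubLE C lam (μ + ν))
    (hN_spec : ∀ μ ν, IsDominant μ → IsDominant ν →
      f μ * f ν = ∑ᶠ lam, N μ ν lam • f lam)
    -- axioms for the family `f', N'`:
    (hf'_inv : ∀ lam, IsDominant lam → WInvariant C (f' lam))
    (hf'_lead : ∀ lam, IsDominant lam → (f' lam).coeff lam = 1)
    (hf'_supp : ∀ lam x, IsDominant lam → (f' lam).coeff x ≠ 0 → SubLE C x lam)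
    (hN'_finite : ∀ μ ν, (Function.support (N' μ ν)).Finite)
    (hN'_dom : ∀ μ ν lam, N' μ ν lam ≠ 0 → IsDominant lam ∧ SubLE C lam (μ + ν))
    (hN'_spec : ∀ μ ν, IsDominant μ → IsDominant ν →
      f' μ * f' ν = ∑ᶠ lam, N' μ ν lam • f' lam)
    -- the decomposition `λ = μ + ν` and the weight `t`:
    (μ ν t : Fin l → ℤ) (hμ : IsDominant μ) (hν : IsDominant ν)
    (hμ0 : μ ≠ 0) (hν0 : ν ≠ 0) (ht : IsDominant t)
    -- agreement of the two families on the "smaller" values: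
    (hμy : ∀ y, SubLE C (μ - y) (μ + ν - t) → (f μ).coeff y = (f' μ).coeff y)
    (hνz : ∀ z, SubLE C (ν - z) (μ + ν - t) → (f ν).coeff z = (f' ν).coeff z)
    (hsx : ∀ s x, IsDominant s → SubLE C s (μ + ν) →
      SubLE C (s - x) (μ + ν - t) → s - x ≠ μ + ν - t → (f s).coeff x = (f' s).coeff x)
    (hNt : N μ ν t = N' μ ν t) :
    (f (μ + ν)).coeff t - N μ ν t = (f' (μ + ν)).coeff t - N' μ ν t :=
  recursion_lemma_general C f f' N N' hf_inv hf_lead hf_supp hN_finite hN_dom hN_spec hf'_lead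
    hf'_supp hN'_finite hN'_dom hN'_spec μ ν t hμ hν hμy hνz hsx hNt
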